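/- arXiv:1307.2016 — 2 statements merged into one kernel-verified Lean document; each statement's English description precedes it below -/
import Mathlib

section
/- With the setup of the operator Θ_J on S(V; A), and the representations (π(f)ξ)(x) = ∫ α_{−x}(f(z))ξ(x−z)dz and (π_J(f)ξ)(x) = ∫ α_{Jy−x}(f̂(y)) ξ̂(y) e(x·y) dy on A-valued Schwartz functions ξ, one has the operator identity π_J(f) = π(Θ_J(f)) for every f ∈ S(V; A). -/
open RealInnerProductSpace MeasureTheory
open FourierTransform

abbrev Vd (d : ℕ) := EuclideanSpace ℝ (Fin d)

/-- `e(x·y) = exp(2πi⟨x,y⟩)`. -/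
noncomputable def eBil {d : ℕ} (x y : Vd d) : ℂ :=
  Complex.exp (2 * Real.pi * Complex.I * ((⟪x, y⟫ : ℝ) : ℂ))

/-- The `A`-valued Fourier transform `f̂(y) = ∫ f(z) e(−z·y) dz`. -/
noncomputable def vFourier {d : ℕ} {A : Type*} [NormedAddCommGroup A] [NormedSpace ℂ A]
    (f : Vd d → A) (y : Vd d) : A :=
  ∫ z : Vd d, Complex.exp (-(2 * Real.pi * Complex.I) * ((⟪z, y⟫ : ℝ) : ℂ)) • f z

/-- `Θ_J(f)(x) = ∫ α_{Jy}(f̂(y)) e(x·y) dy`. -/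
noncomputable def ThetaJ {d : ℕ} {A : Type*} [NormedRing A] [NormedAlgebra ℂ A]
    [CompleteSpace A] (α : Vd d → (A →ₐ[ℂ] A)) (J : Vd d →ₗ[ℝ] Vd d)
    (f : Vd d → A) : Vd d → A :=
  fun x => ∫ y : Vd d, eBil x y • α (J y) (vFourier f y)

/-! Since each `α_w` is an isometric algebra map it passes through the integral defining `Θ_J`,
so `α_{-x}(Θ_J f (z)) = ∫ e(z·y) α_{Jy-x}(f̂(y)) dy`. As `|e| = 1` and `f̂`, `ξ` are integrable,
Fubini swaps the `z`- and `y`-integrals, and the substitution `z ↦ x - z` turns the inner integral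
`∫ e(z·y) ξ(x-z) dz` into `e(x·y) ξ̂(y)`. -/

open FourierTransform

section StronglyContinuous

variable {X Y E F G : Type*} [TopologicalSpace Y] [NormedAddCommGroup E]
  [NormedAddCommGroup F] [FunLike G E F] [AddMonoidHomClass G E F]

theorem continuous_uncurry_of_norm_map_le {α : Y → G} (hiso : ∀ y a, ‖α y a‖ ≤ ‖a‖)
    (hcont : ∀ a, Continuous fun y => α y a) :
    Continuous fun p : Y × E => α p.1 p.2 := by
  rw [continuous_iff_continuousAt]
  rintro ⟨y₀, a₀⟩
  rw [ContinuousAt, tendsto_iff_norm_sub_tendsto_zero]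
  have hle : ∀ p : Y × E, ‖α p.1 p.2 - α y₀ a₀‖ ≤ ‖p.2 - a₀‖ + ‖α p.1 a₀ - α y₀ a₀‖ := by
    intro p
    calc ‖α p.1 p.2 - α y₀ a₀‖ = ‖α p.1 (p.2 - a₀) + (α p.1 a₀ - α y₀ a₀)‖ := by
          rw [map_sub]; abel_nf
      _ ≤ ‖p.2 - a₀‖ + ‖α p.1 a₀ - α y₀ a₀‖ := (norm_add_le _ _).trans (by gcongr; exact hiso _ _)
  refine squeeze_zero (fun _ => norm_nonneg _) hle ?_
  have hbound : Continuous fun p : Y × E => ‖p.2 - a₀‖ + ‖α p.1 a₀ - α y₀ a₀‖ := by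
    have : Continuous fun p : Y × E => α p.1 a₀ := (hcont a₀).comp continuous_fst
    fun_prop
  simpa using hbound.tendsto (y₀, a₀)

theorem MeasureTheory.Integrable.apply_of_norm_map_le [MeasurableSpace X] {μ : Measure X}
    {α : Y → G} (hiso : ∀ y a, ‖α y a‖ ≤ ‖a‖) (hcont : ∀ a, Continuous fun y => α y a)
    {c : X → Y} (hc : AEStronglyMeasurable c μ) {g : X → E} (hg : Integrable g μ) :
    Integrable (fun x => α (c x) (g x)) μ :=
  hg.norm.mono' ((continuous_uncurry_of_norm_map_le hiso hcont).comp_aestronglyMeasurable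
    (hc.prodMk hg.aestronglyMeasurable)) (ae_of_all _ fun _ => hiso _ _)

end StronglyContinuous

section Phase

variable {d : ℕ}

theorem norm_eBil (x y : Vd d) : ‖eBil x y‖ = 1 := by
  rw [eBil, show 2 * Real.pi * Complex.I * ((⟪x, y⟫ : ℝ) : ℂ)
      = ((2 * Real.pi * ⟪x, y⟫ : ℝ) : ℂ) * Complex.I by push_cast; ring]
  exact Complex.norm_exp_ofReal_mul_I _

theorem continuous_eBil : Continuous fun p : Vd d × Vd d => eBil p.1 p.2 := by
  unfold eBil
  fun_prop

theorem eBil_comm (x y : Vd d) : eBil x y = eBil y x := by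
  rw [eBil, eBil, real_inner_comm]

theorem eBil_sub_left (x z y : Vd d) :
    eBil (x - z) y = eBil x y * Complex.exp (-(2 * Real.pi * Complex.I) * ((⟪z, y⟫ : ℝ) : ℂ)) := by
  rw [eBil, eBil, ← Complex.exp_add, inner_sub_left]
  push_cast
  ring_nf

variable {E : Type*} [NormedAddCommGroup E] [NormedSpace ℂ E]

theorem vFourier_eq_fourier (f : Vd d → E) : vFourier f = 𝓕 f := by
  ext y
  rw [Real.fourier_eq', vFourier]
  congr 1 with z
  push_cast
  ring_nf

theorem integral_eBil_smul_comp_sub (g : Vd d → E) (x y : Vd d) :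
    ∫ z, eBil z y • g (x - z) = eBil x y • vFourier g y := by
  calc ∫ z, eBil z y • g (x - z) = ∫ z, eBil (x - z) y • g z := by
        simpa only [sub_sub_cancel] using
          integral_sub_left_eq_self (fun z => eBil (x - z) y • g z) volume x
    _ = eBil x y • vFourier g y := by
        simp_rw [eBil_sub_left, mul_smul]
        rw [integral_smul, vFourier]

theorem MeasureTheory.Integrable.eBil_smul {μ : Measure (Vd d)} {g : Vd d → E} (hg : Integrable g μ)
    (x : Vd d) : Integrable (fun y => eBil x y • g y) μ :=
  hg.bdd_smul 1 (continuous_eBil.comp (Continuous.prodMk_right x)).aestronglyMeasurable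
    (ae_of_all _ fun y => (norm_eBil x y).le)

end Phase

section Fubini

variable {d : ℕ} {A : Type*} [NormedRing A] [NormedAlgebra ℂ A]

theorem integral_integral_eBil_smul_mul {a g : Vd d → A} (ha : Integrable a) (hg : Integrable g) :
    ∫ z, (∫ y, eBil z y • a y) * g z = ∫ y, a y * ∫ z, eBil z y • g z := by
  have hprod : Integrable (Function.uncurry fun z y => (eBil z y • a y) * g z)
      (volume.prod volume) := by
    refine (hg.norm.mul_prod ha.norm).mono' ?_ (ae_of_all _ fun p => ?_)
    · exact (continuous_eBil.aestronglyMeasurable.smul ha.aestronglyMeasurable.comp_snd).mul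
        hg.aestronglyMeasurable.comp_fst
    · calc ‖(eBil p.1 p.2 • a p.2) * g p.1‖ ≤ ‖eBil p.1 p.2 • a p.2‖ * ‖g p.1‖ := norm_mul_le _ _
        _ = ‖g p.1‖ * ‖a p.2‖ := by rw [norm_smul, norm_eBil, one_mul, mul_comm]
  calc ∫ z, (∫ y, eBil z y • a y) * g z = ∫ z, ∫ y, (eBil z y • a y) * g z := by
        simp_rw [integral_mul_const_of_integrable (ha.eBil_smul _)]
    _ = ∫ y, ∫ z, (eBil z y • a y) * g z := integral_integral_swap hprod
    _ = ∫ y, a y * ∫ z, eBil z y • g z := by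
        congr 1 with y
        have hgy : Integrable fun z => eBil z y • g z := by
          simpa only [eBil_comm _ y] using hg.eBil_smul y
        simp_rw [smul_mul_assoc, ← mul_smul_comm]
        exact integral_const_mul_of_integrable hgy

end Fubini

section Theta

variable {d : ℕ} {A : Type*} [NormedRing A] [NormedAlgebra ℂ A] [CompleteSpace A]

theorem apply_ThetaJ {α : Vd d → (A →ₐ[ℂ] A)} (hαadd : ∀ x y : Vd d, α (x + y) = (α x).comp (α y))
    (hiso : ∀ (x : Vd d) (a : A), ‖α x a‖ = ‖a‖) (J : Vd d →ₗ[ℝ] Vd d) (f : Vd d → A)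
    (w z : Vd d) :
    α w (ThetaJ α J f z) = ∫ y, eBil z y • α (w + J y) (vFourier f y) := by
  let αw : A →ₗᵢ[ℂ] A := { (α w).toLinearMap with norm_map' := hiso w }
  calc α w (ThetaJ α J f z) = ∫ y, αw (eBil z y • α (J y) (vFourier f y)) :=
        (αw.integral_comp_comm _).symm
    _ = ∫ y, eBil z y • α (w + J y) (vFourier f y) := by
        simp_rw [map_smul, hαadd]
        rfl

end Theta

theorem stmt11_general (d : ℕ) {A : Type*} [NormedRing A] [NormedAlgebra ℂ A] [CompleteSpace A]
    (α : Vd d → (A →ₐ[ℂ] A))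
    (hαadd : ∀ x y : Vd d, α (x + y) = (α x).comp (α y))
    (hiso : ∀ (x : Vd d) (a : A), ‖α x a‖ = ‖a‖)
    (hcont : ∀ a : A, Continuous fun x : Vd d => α x a)
    (J : Vd d →ₗ[ℝ] Vd d) :
    -- `π_J(f) = π(Θ_J(f))`:
    -- `(π(Θ_J f)ξ)(x) = ∫ α_{−x}((Θ_J f)(z)) ξ(x−z) dz` equals
    -- `(π_J(f)ξ)(x) = ∫ α_{Jy−x}(f̂(y)) ξ̂(y) e(x·y) dy`
    ∀ (f ξ : SchwartzMap (Vd d) A) (x : Vd d),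
      (∫ z : Vd d, α (-x) (ThetaJ α J (⇑f) z) * ξ (x - z))
        = ∫ y : Vd d, eBil x y • (α (J y - x) (vFourier (⇑f) y) * vFourier (⇑ξ) y) := by
  intro f ξ x
  have hf : Integrable (vFourier ⇑f) := by
    rw [vFourier_eq_fourier, ← SchwartzMap.fourier_coe]
    exact (𝓕 f).integrable
  have ha : Integrable fun y => α (J y - x) (vFourier f y) :=
    hf.apply_of_norm_map_le (fun y a => (hiso y a).le) hcont
      (J.continuous_of_finiteDimensional.sub continuous_const).aestronglyMeasurable
  calc (∫ z, α (-x) (ThetaJ α J (⇑f) z) * ξ (x - z))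
      = ∫ z, (∫ y, eBil z y • α (J y - x) (vFourier f y)) * ξ (x - z) := by
        simp_rw [apply_ThetaJ hαadd hiso, neg_add_eq_sub]
    _ = ∫ y, α (J y - x) (vFourier f y) * ∫ z, eBil z y • ξ (x - z) :=
        integral_integral_eBil_smul_mul ha (ξ.integrable.comp_sub_left x)
    _ = ∫ y, eBil x y • (α (J y - x) (vFourier f y) * vFourier ξ y) := by
        simp_rw [integral_eBil_smul_comp_sub, mul_smul_comm]

theorem stmt11 (d : ℕ) {A : Type*} [NormedRing A] [NormedAlgebra ℂ A] [CompleteSpace A]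
    (α : Vd d → (A →ₐ[ℂ] A))
    (hα0 : α 0 = AlgHom.id ℂ A)
    (hαadd : ∀ x y : Vd d, α (x + y) = (α x).comp (α y))
    (hiso : ∀ (x : Vd d) (a : A), ‖α x a‖ = ‖a‖)
    (hcont : ∀ a : A, Continuous fun x : Vd d => α x a)
    (J : Vd d →ₗ[ℝ] Vd d) (hJ : ∀ x y : Vd d, ⟪J x, y⟫ = -⟪x, J y⟫) :
    -- `π_J(f) = π(Θ_J(f))`:
    -- `(π(Θ_J f)ξ)(x) = ∫ α_{−x}((Θ_J f)(z)) ξ(x−z) dz` equals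
    -- `(π_J(f)ξ)(x) = ∫ α_{Jy−x}(f̂(y)) ξ̂(y) e(x·y) dy`
    ∀ (f ξ : SchwartzMap (Vd d) A) (x : Vd d),
      (∫ z : Vd d, α (-x) (ThetaJ α J (⇑f) z) * ξ (x - z))
        = ∫ y : Vd d, eBil x y • (α (J y - x) (vFourier (⇑f) y) * vFourier (⇑ξ) y) :=
  stmt11_general d α hαadd hiso hcont J
end

section
/- Let V = ℝ^d and define, for J skew-symmetric, the twisted dual action on A-valued Schwartz functions by (β_y f)(x) = e(−x·y) α_{−Jy}(f(x)), and the untwisted dual action by (γ_y f)(x) = e(−x·y) f(x). Then the operator Θ_J intertwines them: Θ_J(γ_y f) = β_y(Θ_J f) for all y ∈ V and f ∈ S(V; A). -/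
open RealInnerProductSpace MeasureTheory

lemma eBil_add_right {d : ℕ} (x y z : Vd d) : eBil x (y + z) = eBil x y * eBil x z := by
  unfold eBil
  rw [inner_add_right, ← Complex.exp_add]
  push_cast
  ring_nf

theorem stmt12 (d : ℕ) {A : Type*} [NormedRing A] [NormedAlgebra ℂ A] [CompleteSpace A]
    (α : Vd d → (A →ₐ[ℂ] A))
    (hα0 : α 0 = AlgHom.id ℂ A)
    (hαadd : ∀ x y : Vd d, α (x + y) = (α x).comp (α y))
    (hiso : ∀ (x : Vd d) (a : A), ‖α x a‖ = ‖a‖)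
    (hcont : ∀ a : A, Continuous fun x : Vd d => α x a)
    (J : Vd d →ₗ[ℝ] Vd d) (hJ : ∀ x y : Vd d, ⟪J x, y⟫ = -⟪x, J y⟫) :
    -- `Θ_J(γ_y f) = β_y(Θ_J f)` where `(γ_y f)(x) = e(−x·y) f(x)` and
    -- `(β_y f)(x) = e(−x·y) α_{−Jy}(f(x))`
    ∀ (f : SchwartzMap (Vd d) A) (y x : Vd d),
      ThetaJ α J (fun z => eBil z (-y) • f z) x
        = eBil x (-y) • α (-(J y)) (ThetaJ α J (⇑f) x) := by
  intro f y x
  have hinvA : ∀ a : A, α (J y) (α (-(J y)) a) = a := by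
    intro a
    have := congrArg (fun g : A →ₐ[ℂ] A => g a) (hαadd (J y) (-(J y)))
    simpa [add_neg_cancel, hα0] using this.symm
  have hinvB : ∀ a : A, α (-(J y)) (α (J y) a) = a := by
    intro a
    have := congrArg (fun g : A →ₐ[ℂ] A => g a) (hαadd (-(J y)) (J y))
    simpa [neg_add_cancel, hα0] using this.symm
  let T : A ≃ₗᵢ[ℂ] A :=
    { toFun := α (-(J y))
      invFun := α (J y)
      map_add' := map_add _
      map_smul' := map_smul _
      left_inv := hinvA
      right_inv := hinvB
      norm_map' := hiso _ }
  -- Step 1: the Fourier transform of the twisted function is a shift.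
  have h1 : ∀ w : Vd d, vFourier (fun z => eBil z (-y) • (f : Vd d → A) z) w
      = vFourier (f : Vd d → A) (w + y) := by
    intro w
    unfold vFourier
    congr 1
    funext z
    rw [smul_smul]
    congr 1
    unfold eBil
    rw [inner_add_right, ← Complex.exp_add]
    push_cast
    rw [inner_neg_right]
    push_cast
    ring_nf
  unfold ThetaJ
  simp only [h1]
  -- Step 2: change of variables w ↦ w + y.
  have h2 : (∫ w : Vd d, eBil x w • α (J w) (vFourier (f : Vd d → A) (w + y)))
      = ∫ u : Vd d, eBil x (u - y) • α (J (u - y)) (vFourier (f : Vd d → A) u) := by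
    rw [← MeasureTheory.integral_add_right_eq_self
      (fun u => eBil x (u - y) • α (J (u - y)) (vFourier (f : Vd d → A) u)) y]
    simp [add_sub_cancel_right]
  rw [h2]
  -- Step 3: split the twist.
  have h3 : ∀ u : Vd d, eBil x (u - y) • α (J (u - y)) (vFourier (f : Vd d → A) u)
      = eBil x (-y) • T (eBil x u • α (J u) (vFourier (f : Vd d → A) u)) := by
    intro u
    have hb : eBil x (u - y) = eBil x u * eBil x (-y) := by
      rw [sub_eq_add_neg, eBil_add_right]
    have ha : α (J (u - y)) = (α (-(J y))).comp (α (J u)) := by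
      rw [← hαadd]
      congr 1
      rw [map_sub]
      abel
    rw [hb, ha]
    simp only [AlgHom.comp_apply, mul_comm (eBil x u), mul_smul]
    congr 1
    exact (T.toLinearEquiv.map_smul _ _).symm
  simp only [h3]
  rw [integral_smul]
  congr 1
  exact T.toContinuousLinearEquiv.integral_comp_comm
    (fun u : Vd d => eBil x u • α (J u) (vFourier (f : Vd d → A) u))
end
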